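/- arXiv:2510.12007 — 4 statements merged into one kernel-verified Lean document; each statement's English description precedes it below -/
import Mathlib

section
/- Let {v_k}, {u_k}, {a_k}, {b_k} be sequences of nonnegative real numbers with ∑_{k=0}^∞ a_k < ∞ and ∑_{k=0}^∞ b_k < ∞, satisfying v_{k+1} ≤ (1 + a_k)·v_k - u_k + b_k for all k ≥ 0. Then the sequence {v_k} converges and ∑_{k=0}^∞ u_k < ∞. -/
open Filter Topology

/-- Deterministic Robbins–Siegmund lemma: if nonnegative sequences satisfy
`v_{k+1} ≤ (1 + a_k) v_k - u_k + b_k` with `∑ a_k < ∞` and `∑ b_k < ∞`, then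
`{v_k}` converges and `∑ u_k < ∞`. -/
theorem robbins_siegmund (v u a b : ℕ → ℝ)
    (hv : ∀ k, 0 ≤ v k) (hu : ∀ k, 0 ≤ u k) (ha : ∀ k, 0 ≤ a k) (hb : ∀ k, 0 ≤ b k)
    (hsa : Summable a) (hsb : Summable b)
    (hrec : ∀ k, v (k + 1) ≤ (1 + a k) * v k - u k + b k) :
    (∃ l : ℝ, Tendsto v atTop (𝓝 l)) ∧ Summable u := by
  set P : ℕ → ℝ := fun k => ∏ i ∈ Finset.range k, (1 + a i) with hPdef
  have hP1 : ∀ k, 1 ≤ P k := by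
    intro k
    show (1:ℝ) ≤ ∏ i ∈ Finset.range k, (1 + a i)
    induction k with
    | zero => simp
    | succ n ih => rw [Finset.prod_range_succ]; nlinarith [ha n]
  have hPpos : ∀ k, 0 < P k := fun k => lt_of_lt_of_le one_pos (hP1 k)
  have hPsucc : ∀ k, P (k + 1) = P k * (1 + a k) := fun k => Finset.prod_range_succ _ k
  set C := Real.exp (∑' i, a i) with hCdef
  have hPbound : ∀ k, P k ≤ C := by
    intro k
    calc P k ≤ ∏ i ∈ Finset.range k, Real.exp (a i) :=
          Finset.prod_le_prod (fun i _ => by linarith [ha i])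
            (fun i _ => by linarith [Real.add_one_le_exp (a i)])
      _ = Real.exp (∑ i ∈ Finset.range k, a i) := (Real.exp_sum _ _).symm
      _ ≤ C := Real.exp_le_exp.mpr (Summable.sum_le_tsum _ (fun i _ => ha i) hsa)
  have hPmono : Monotone P := monotone_nat_of_le_succ (fun k => by
    rw [hPsucc]; nlinarith [hPpos k, ha k])
  obtain ⟨Pl, hPl⟩ : ∃ Pl, Tendsto P atTop (𝓝 Pl) :=
    ⟨_, tendsto_atTop_ciSup hPmono ⟨C, fun x ⟨k, hk⟩ => hk ▸ hPbound k⟩⟩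
  set V : ℕ → ℝ := fun k => v k / P k with hVdef
  have hVnonneg : ∀ k, 0 ≤ V k := fun k => div_nonneg (hv k) (hPpos k).le
  have hVstep : ∀ k, V (k + 1) ≤ V k - u k / P (k + 1) + b k / P (k + 1) := by
    intro k
    have h1 : V (k + 1) ≤ ((1 + a k) * v k - u k + b k) / P (k + 1) := by
      exact (div_le_div_iff_of_pos_right (hPpos (k + 1))).mpr (hrec k)
    have h2 : ((1 + a k) * v k - u k + b k) / P (k + 1)
        = V k - u k / P (k + 1) + b k / P (k + 1) := by
      simp only [hVdef]
      rw [hPsucc k]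
      have hPk := (hPpos k).ne'
      have hak : (1 : ℝ) + a k ≠ 0 := ne_of_gt (by linarith [ha k])
      field_simp
    linarith [h1, h2.symm.le]
  -- telescoping inequality
  have hTele : ∀ n, V n + ∑ k ∈ Finset.range n, u k / P (k + 1)
      ≤ V 0 + ∑ k ∈ Finset.range n, b k := by
    intro n
    induction n with
    | zero => simp
    | succ n ih =>
      rw [Finset.sum_range_succ, Finset.sum_range_succ]
      have hbk : b n / P (n + 1) ≤ b n := by
        rw [div_le_iff₀ (hPpos (n + 1))]
        nlinarith [hb n, hP1 (n + 1)]
      linarith [hVstep n]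
  have hBsum : ∀ n, ∑ k ∈ Finset.range n, b k ≤ ∑' k, b k :=
    fun n => Summable.sum_le_tsum _ (fun i _ => hb i) hsb
  -- summability of u
  have hCpos : 0 < C := Real.exp_pos _
  have hsu : Summable u := by
    apply summable_of_sum_range_le (fun k => hu k) (c := C * (V 0 + ∑' k, b k))
    intro n
    have h1 : ∑ k ∈ Finset.range n, u k ≤ C * ∑ k ∈ Finset.range n, u k / P (k + 1) := by
      rw [Finset.mul_sum]
      apply Finset.sum_le_sum
      intro k _
      calc u k = (u k / P (k + 1)) * P (k + 1) :=
            (div_mul_cancel₀ _ (hPpos (k + 1)).ne').symm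
        _ ≤ (u k / P (k + 1)) * C :=
            mul_le_mul_of_nonneg_left (hPbound _) (div_nonneg (hu k) (hPpos _).le)
        _ = C * (u k / P (k + 1)) := mul_comm _ _
    have h2 : ∑ k ∈ Finset.range n, u k / P (k + 1) ≤ V 0 + ∑' k, b k := by
      have := hTele n
      have := hBsum n
      have := hVnonneg n
      linarith
    calc ∑ k ∈ Finset.range n, u k ≤ C * ∑ k ∈ Finset.range n, u k / P (k + 1) := h1
      _ ≤ C * (V 0 + ∑' k, b k) := by
          apply mul_le_mul_of_nonneg_left h2 hCpos.le
  refine ⟨?_, hsu⟩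
  -- convergence of V: W k = V k + tail of b is antitone, bounded below
  set T : ℕ → ℝ := fun k => ∑' i, b (i + k) with hTdef
  have hTsummable : ∀ k, Summable (fun i => b (i + k)) := fun k =>
    (summable_nat_add_iff k).mpr hsb
  have hTnonneg : ∀ k, 0 ≤ T k := fun k => tsum_nonneg (fun i => hb _)
  have hTrec : ∀ k, T k = b k + T (k + 1) := by
    intro k
    have h := Summable.tsum_eq_zero_add (hTsummable k)
    simp only [zero_add] at h
    rw [hTdef]
    simp only
    rw [h]
    congr 1
    apply tsum_congr
    intro i
    congr 1
    omega
  set W : ℕ → ℝ := fun k => V k + T k with hWdef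
  have hWanti : Antitone W := antitone_nat_of_succ_le (by
    intro k
    have h1 := hVstep k
    have hbk : b k / P (k + 1) ≤ b k := by
      rw [div_le_iff₀ (hPpos (k + 1))]
      nlinarith [hb k, hP1 (k + 1)]
    have huk : 0 ≤ u k / P (k + 1) := div_nonneg (hu k) (hPpos (k + 1)).le
    have h2 := hTrec k
    simp only [hWdef]
    linarith)
  have hWbdd : BddBelow (Set.range W) :=
    ⟨0, fun x ⟨k, hk⟩ => hk ▸ add_nonneg (hVnonneg k) (hTnonneg k)⟩
  have hWlim : Tendsto W atTop (𝓝 (⨅ k, W k)) := tendsto_atTop_ciInf hWanti hWbdd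
  have hTlim : Tendsto T atTop (𝓝 0) := by
    have := tendsto_sum_nat_add b
    exact this
  have hVlim : Tendsto V atTop (𝓝 (⨅ k, W k)) := by
    have : Tendsto (fun k => W k - T k) atTop (𝓝 ((⨅ k, W k) - 0)) := hWlim.sub hTlim
    simp only [sub_zero] at this
    convert this using 1
    funext k
    simp [hWdef]
  refine ⟨(⨅ k, W k) * Pl, ?_⟩
  have : Tendsto (fun k => V k * P k) atTop (𝓝 ((⨅ k, W k) * Pl)) := hVlim.mul hPl
  convert this using 1
  funext k
  rw [hVdef]
  simp only
  rw [div_mul_cancel₀ _ (hPpos k).ne']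
end

section
/- Let a, b ∈ ℝ^n with b ≠ 0, α ≥ 0, μ > 0, θ ∈ (0,1), and let C_φ ≥ ||a||. Define λ = (1/||b||^2)·max{-b^T a + α||b||, 0}. Suppose s > 0 satisfies s^{2θ} ≤ μ·s·||b|| (i.e., the Łojasiewicz condition ||b|| ≥ s^{2θ-1}/μ). Then λ·s ≤ μ(C_φ + α)·s^{2-2θ}. -/
open scoped RealInnerProductSpace

/-- Complementarity-slackness bound for the dynamic-barrier dual multiplier:
if `λ = (1/‖b‖²)·max (-⟪b,a⟫ + α‖b‖) 0`, `‖a‖ ≤ C_φ`, and `s > 0` satisfies the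
Łojasiewicz condition `s^(2θ) ≤ μ·s·‖b‖`, then `λ·s ≤ μ(C_φ + α)·s^(2-2θ)`. -/
theorem slackness_bound (n : ℕ) (a b : EuclideanSpace ℝ (Fin n)) (hb : b ≠ 0)
    (α μ θ Cφ : ℝ) (hα : 0 ≤ α) (hμ : 0 < μ) (hθ0 : 0 < θ) (hθ1 : θ < 1)
    (hCφ : ‖a‖ ≤ Cφ)
    (lam : ℝ) (hlam : lam = (1 / ‖b‖ ^ 2) * max (-⟪b, a⟫ + α * ‖b‖) 0)
    (s : ℝ) (hs : 0 < s) (hLoj : s ^ (2 * θ) ≤ μ * s * ‖b‖) :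
    lam * s ≤ μ * (Cφ + α) * s ^ (2 - 2 * θ) := by
  have hbpos : 0 < ‖b‖ := norm_pos_iff.mpr hb
  have hCa : 0 ≤ Cφ := le_trans (norm_nonneg a) hCφ
  -- bound lam ≤ (Cφ + α)/‖b‖
  have hinner : -⟪b, a⟫ ≤ ‖b‖ * ‖a‖ := by
    have := abs_real_inner_le_norm b a
    linarith [neg_abs_le ⟪b, a⟫, abs_nonneg ⟪b, a⟫, le_abs_self ⟪b, a⟫,
      abs_le.mp this]
  have hlam_le : lam ≤ (Cφ + α) / ‖b‖ := by
    rw [hlam]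
    have h1 : max (-⟪b, a⟫ + α * ‖b‖) 0 ≤ (Cφ + α) * ‖b‖ := by
      apply max_le
      · nlinarith
      · positivity
    have hb2 : (0:ℝ) < ‖b‖ ^ 2 := by positivity
    rw [div_mul_eq_mul_div, one_mul, div_le_div_iff₀ hb2 hbpos]
    nlinarith [h1, hbpos]
  -- bound 1/‖b‖ ≤ μ * s^(1-2θ)
  have hspow : (0:ℝ) < s ^ (2 * θ) := Real.rpow_pos_of_pos hs _
  have hinv : ‖b‖⁻¹ ≤ μ * s / s ^ (2 * θ) := by
    rw [inv_le_iff_one_le_mul₀ hbpos, div_mul_eq_mul_div, le_div_iff₀ hspow]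
    linarith [hLoj]
  have hsnn : 0 ≤ s := hs.le
  calc lam * s ≤ ((Cφ + α) / ‖b‖) * s := by
        apply mul_le_mul_of_nonneg_right hlam_le hsnn
    _ = (Cφ + α) * ‖b‖⁻¹ * s := by rw [div_eq_mul_inv]
    _ ≤ (Cφ + α) * (μ * s / s ^ (2 * θ)) * s := by
        apply mul_le_mul_of_nonneg_right _ hsnn
        exact mul_le_mul_of_nonneg_left hinv (by positivity)
    _ = μ * (Cφ + α) * (s ^ (2:ℝ) / s ^ (2 * θ)) := by
        rw [Real.rpow_two]; ring
    _ = μ * (Cφ + α) * s ^ (2 - 2 * θ) := by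
        rw [← Real.rpow_sub hs]
end

section
/- Let h : ℝ^n × ℝ^m → ℝ be continuously differentiable, and suppose for every x, h(x,·) is η-strongly concave over ℝ^m with η > 0, and the partial gradients satisfy ||∇_x h(x,u) - ∇_x h(x̄,ū)|| ≤ L_{xu}(||x - x̄|| + ||u - ū||) and ||∇_u h(x,u) - ∇_u h(x̄,ū)|| ≤ L_{xu}||x - x̄|| + L_{uu}||u - ū||. Define the value function h*(x) = max_{u ∈ ℝ^m} h(x,u) and let u*(x) be the unique maximizer. Then u*(·) is (L_{xu}/η)-Lipschitz continuous. -/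
open InnerProductSpace Set

local notation "⟪" x ", " y "⟫" => @inner ℝ _ _ x y

section aux

variable {F : Type*} [NormedAddCommGroup F] [InnerProductSpace ℝ F] [CompleteSpace F]

lemma aux_hasGradientAt_const_mul_norm_sq (c : ℝ) (u : F) :
    HasGradientAt (fun v : F => c * ‖v‖ ^ 2) ((2 * c) • u) u := by
  have h1 : HasFDerivAt (fun v : F => ⟪v, v⟫) ((fderivInnerCLM ℝ (u, u)).comp
      ((ContinuousLinearMap.id ℝ F).prod (ContinuousLinearMap.id ℝ F))) u :=
    (hasFDerivAt_id u).inner ℝ (hasFDerivAt_id u)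
  have h2 : HasFDerivAt (fun v : F => c * ⟪v, v⟫)
      (c • ((fderivInnerCLM ℝ (u, u)).comp
      ((ContinuousLinearMap.id ℝ F).prod (ContinuousLinearMap.id ℝ F)))) u :=
    h1.const_mul c
  have heq : (fun v : F => c * ⟪v, v⟫) = fun v : F => c * ‖v‖ ^ 2 := by
    funext v; rw [real_inner_self_eq_norm_sq]
  rw [heq] at h2
  have hdual : toDual ℝ F ((2 * c) • u) = c • ((fderivInnerCLM ℝ (u, u)).comp
      ((ContinuousLinearMap.id ℝ F).prod (ContinuousLinearMap.id ℝ F))) := by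
    ext v
    simp [fderivInnerCLM_apply, real_inner_smul_left, real_inner_comm]
    ring
  rw [HasGradientAt, HasGradientAtFilter, hdual]
  exact h2

lemma aux_grad_mono_of_convexOn {g : F → ℝ} {g' : F → F}
    (hg : ∀ z, HasGradientAt g (g' z) z)
    (hc : ConvexOn ℝ univ g) (u v : F) :
    ⟪g' v, u - v⟫ ≤ ⟪g' u, u - v⟫ := by
  set w := u - v with hw
  have hline : ∀ t : ℝ, HasDerivAt (fun t : ℝ => g (v + t • w)) ⟪g' (v + t • w), w⟫ t := by
    intro t
    have h1 : HasDerivAt (fun t : ℝ => v + t • w) w t := by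
      simpa using ((hasDerivAt_id t).smul_const w).const_add v
    have h2 := (hg (v + t • w)).hasFDerivAt.comp_hasDerivAt t h1
    simpa [InnerProductSpace.toDual_apply_apply, Function.comp_def] using h2
  have hφ : ConvexOn ℝ univ (fun t : ℝ => g (v + t • w)) := by
    have h3 := hc.comp_affineMap (AffineMap.lineMap v u)
    have h4 : (g ∘ (AffineMap.lineMap v u)) = fun t : ℝ => g (v + t • w) := by
      funext t
      simp [AffineMap.lineMap_apply, hw, add_comm]
    rw [h4] at h3
    simpa using h3
  have h0 := hφ.le_slope_of_hasDerivAt (mem_univ (0:ℝ)) (mem_univ (1:ℝ)) one_pos (hline 0)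
  have h1 := hφ.slope_le_of_hasDerivAt (mem_univ (0:ℝ)) (mem_univ (1:ℝ)) one_pos (hline 1)
  have h2 : ⟪g' (v + (0:ℝ) • w), w⟫ ≤ ⟪g' (v + (1:ℝ) • w), w⟫ := le_trans h0 h1
  simpa [hw] using h2

end aux

/-- If `h(x,·)` is `η`-strongly concave over `ℝ^m` with unique maximizer
`u*(x)` and the partial gradients of `h` are Lipschitz as stated, then the
argmax map `u*(·)` is `(L_xu/η)`-Lipschitz. -/
theorem argmax_lipschitz (n m : ℕ)
    (h : EuclideanSpace ℝ (Fin n) → EuclideanSpace ℝ (Fin m) → ℝ)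
    (hcont : ContDiff ℝ 1 (fun p : EuclideanSpace ℝ (Fin n) × EuclideanSpace ℝ (Fin m) =>
      h p.1 p.2))
    (η Lxu Luu : ℝ) (hη : 0 < η) (hLxu : 0 < Lxu) (hLuu : 0 ≤ Luu)
    (hstrong : ∀ x, ConcaveOn ℝ Set.univ (fun u => h x u + (η / 2) * ‖u‖ ^ 2))
    (hlipx : ∀ x x' u u', ‖gradient (fun z => h z u) x - gradient (fun z => h z u') x'‖ ≤
      Lxu * (‖x - x'‖ + ‖u - u'‖))
    (hlipu : ∀ x x' u u', ‖gradient (h x) u - gradient (h x') u'‖ ≤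
      Lxu * ‖x - x'‖ + Luu * ‖u - u'‖)
    (ustar : EuclideanSpace ℝ (Fin n) → EuclideanSpace ℝ (Fin m))
    (hmax : ∀ x, IsMaxOn (h x) Set.univ (ustar x))
    (huniq : ∀ x u, IsMaxOn (h x) Set.univ u → u = ustar x) :
    ∀ x x', ‖ustar x - ustar x'‖ ≤ (Lxu / η) * ‖x - x'‖ := by
  intro x x'
  -- differentiability of h x
  have hdiff : ∀ x0, Differentiable ℝ (h x0) := by
    intro x0
    have hd := hcont.differentiable one_ne_zero
    exact hd.comp ((differentiable_const x0).prodMk differentiable_id)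
  -- gradient vanishes at maximizer
  have hgradzero : ∀ x0, gradient (h x0) (ustar x0) = 0 := by
    intro x0
    have hloc : IsLocalMax (h x0) (ustar x0) :=
      (hmax x0).isLocalMax Filter.univ_mem
    have : fderiv ℝ (h x0) (ustar x0) = 0 := hloc.fderiv_eq_zero
    rw [gradient, this, map_zero]
  -- strong concavity: monotonicity of neg gradient
  set u := ustar x
  set v := ustar x'
  -- gradient of the convex function G x0 := -(h x0 · + (η/2)‖·‖²)
  have hG : ∀ x0 (z : EuclideanSpace ℝ (Fin m)),
      HasGradientAt (fun w => -(h x0 w + (η/2) * ‖w‖ ^ 2))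
        (-(gradient (h x0) z + η • z)) z := by
    intro x0 z
    have h1 : HasGradientAt (h x0) (gradient (h x0) z) z :=
      ((hdiff x0) z).hasGradientAt
    have h2 := aux_hasGradientAt_const_mul_norm_sq (η/2) z
    have h3 : HasFDerivAt (fun w => -(h x0 w + (η/2) * ‖w‖ ^ 2))
        (-(toDual ℝ (EuclideanSpace ℝ (Fin m)) (gradient (h x0) z)
          + toDual ℝ (EuclideanSpace ℝ (Fin m)) ((2 * (η/2)) • z))) z :=
      (h1.hasFDerivAt.add h2.hasFDerivAt).neg
    have h4 : toDual ℝ (EuclideanSpace ℝ (Fin m)) (-(gradient (h x0) z + η • z))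
        = -(toDual ℝ (EuclideanSpace ℝ (Fin m)) (gradient (h x0) z)
          + toDual ℝ (EuclideanSpace ℝ (Fin m)) ((2 * (η/2)) • z)) := by
      have he2 : (2 * (η/2)) = η := by ring
      rw [he2, map_neg, map_add]
    rw [HasGradientAt, HasGradientAtFilter, h4]
    exact h3
  have hconv : ∀ x0, ConvexOn ℝ univ
      (fun w : EuclideanSpace ℝ (Fin m) => -(h x0 w + (η/2) * ‖w‖ ^ 2)) := by
    intro x0
    have := (hstrong x0).neg
    exact this
  -- monotonicity applied with g = G x, points u v
  have hmono := aux_grad_mono_of_convexOn (hG x) (hconv x) u v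
  -- gradients at the maximizers
  rw [hgradzero x] at hmono
  -- hmono : ⟪-(∇(h x) v + η•v), u - v⟫ ≤ ⟪-(0 + η•u), u - v⟫
  have key : η * ‖u - v‖ ^ 2 ≤ ⟪gradient (h x) v - gradient (h x') v, u - v⟫ := by
    have h5 : ⟪-(gradient (h x) v + η • v), u - v⟫ ≤ ⟪-((0:EuclideanSpace ℝ (Fin m)) + η • u), u - v⟫ := hmono
    rw [hgradzero x'] 
    have h6 : ⟪gradient (h x) v, u - v⟫ + η * ⟪v, u - v⟫ ≥ η * ⟪u, u - v⟫ := by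
      have := h5
      simp only [inner_neg_left, inner_add_left, real_inner_smul_left, zero_add] at this
      linarith
    have h7 : ⟪u, u - v⟫ - ⟪v, u - v⟫ = ‖u - v‖ ^ 2 := by
      rw [← inner_sub_left, real_inner_self_eq_norm_sq]
    simp only [sub_zero]
    nlinarith [h6, h7]
  have hnorm : ⟪gradient (h x) v - gradient (h x') v, u - v⟫ ≤
      Lxu * ‖x - x'‖ * ‖u - v‖ := by
    calc ⟪gradient (h x) v - gradient (h x') v, u - v⟫
        ≤ ‖gradient (h x) v - gradient (h x') v‖ * ‖u - v‖ := real_inner_le_norm _ _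
      _ ≤ (Lxu * ‖x - x'‖ + Luu * ‖v - v‖) * ‖u - v‖ := by
          apply mul_le_mul_of_nonneg_right (hlipu x x' v v) (norm_nonneg _)
      _ = Lxu * ‖x - x'‖ * ‖u - v‖ := by simp
  rcases eq_or_ne u v with he | hne
  · rw [he]
    simp
    positivity
  · have hpos : 0 < ‖u - v‖ := by
      rw [norm_pos_iff, sub_ne_zero]; exact hne
    have : η * ‖u - v‖ ^ 2 ≤ Lxu * ‖x - x'‖ * ‖u - v‖ := le_trans key hnorm
    rw [div_mul_eq_mul_div, le_div_iff₀ hη]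
    nlinarith [this, hpos]
end

section
/- Let h : ℝ^n × ℝ^m → ℝ be continuously differentiable such that for each x the function h(x,·) is η-strongly concave (η > 0) with unique maximizer u*(x), and suppose u*(·) is κ-Lipschitz and ∇_x h satisfies ||∇_x h(x,u) - ∇_x h(x,ū)|| ≤ L_{xu}||u - ū||. Then the value function h*(x) = h(x, u*(x)) is differentiable with ∇h*(x) = ∇_x h(x, u*(x)), and if additionally ||∇_x h(x,u) - ∇_x h(x̄,u)|| ≤ L_{xx}||x - x̄||, then ∇h* is (L_{xx} + L_{xu}·κ)-Lipschitz. -/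
open InnerProductSpace Asymptotics


/-- Danskin-type envelope theorem: if `h(x,·)` is `η`-strongly concave with
unique maximizer `u*(x)`, `u*(·)` is `κ`-Lipschitz, and `∇ₓh` is Lipschitz in
`u`, then `h*(x) = h(x, u*(x))` is differentiable with
`∇h*(x) = ∇ₓh(x, u*(x))`; if additionally `∇ₓh` is `L_xx`-Lipschitz in `x`,
then `∇h*` is `(L_xx + L_xu κ)`-Lipschitz. -/
theorem envelope_theorem (n m : ℕ)
    (h : EuclideanSpace ℝ (Fin n) → EuclideanSpace ℝ (Fin m) → ℝ)
    (hcont : ContDiff ℝ 1 (fun p : EuclideanSpace ℝ (Fin n) × EuclideanSpace ℝ (Fin m) =>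
      h p.1 p.2))
    (η κ Lxu : ℝ) (hη : 0 < η) (hκ : 0 ≤ κ) (hLxu : 0 < Lxu)
    (hstrong : ∀ x, ConcaveOn ℝ Set.univ (fun u => h x u + (η / 2) * ‖u‖ ^ 2))
    (ustar : EuclideanSpace ℝ (Fin n) → EuclideanSpace ℝ (Fin m))
    (hmax : ∀ x, IsMaxOn (h x) Set.univ (ustar x))
    (huniq : ∀ x u, IsMaxOn (h x) Set.univ u → u = ustar x)
    (hustar_lip : ∀ x x', ‖ustar x - ustar x'‖ ≤ κ * ‖x - x'‖)
    (hlipu : ∀ x u u', ‖gradient (fun z => h z u) x - gradient (fun z => h z u') x‖ ≤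
      Lxu * ‖u - u'‖) :
    (∀ x, HasGradientAt (fun z => h z (ustar z))
        (gradient (fun z => h z (ustar x)) x) x) ∧
      (∀ Lxx : ℝ, 0 ≤ Lxx →
        (∀ x x' u, ‖gradient (fun z => h z u) x - gradient (fun z => h z u) x'‖ ≤
          Lxx * ‖x - x'‖) →
        ∀ x x', ‖gradient (fun z => h z (ustar x)) x -
            gradient (fun z => h z (ustar x')) x'‖ ≤
          (Lxx + Lxu * κ) * ‖x - x'‖) := by
  -- differentiability of z ↦ h z u
  have hdiff : ∀ (u : EuclideanSpace ℝ (Fin m)) (x : EuclideanSpace ℝ (Fin n)),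
      DifferentiableAt ℝ (fun z => h z u) x := by
    intro u x
    have : DifferentiableAt ℝ (fun p : EuclideanSpace ℝ (Fin n) × EuclideanSpace ℝ (Fin m) =>
        h p.1 p.2) (x, u) := (hcont.differentiable one_ne_zero).differentiableAt
    exact this.comp x (differentiableAt_id.prodMk (differentiableAt_const u) :
      DifferentiableAt ℝ (fun z : EuclideanSpace ℝ (Fin n) => (z, u)) x)
  have hgrad : ∀ u x, HasGradientAt (fun z => h z u) (gradient (fun z => h z u) x) x :=
    fun u x => (hdiff u x).hasGradientAt
  constructor
  · intro x
    set u : EuclideanSpace ℝ (Fin m) := ustar x with hu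
    set g : EuclideanSpace ℝ (Fin n) := gradient (fun z => h z u) x with hg
    rw [hasGradientAt_iff_hasFDerivAt]
    set L := toDual ℝ (EuclideanSpace ℝ (Fin n)) g with hL
    have hbase : HasFDerivAt (fun z => h z u) L x := (hgrad u x).hasFDerivAt
    rw [hasFDerivAt_iff_isLittleO_nhds_zero] at hbase ⊢
    -- remainder bound
    have key : ∀ v : EuclideanSpace ℝ (Fin n),
        ‖h (x + v) (ustar (x + v)) - h x u - L v‖ ≤
          ‖h (x + v) u - h x u - L v‖ + (Lxu * κ) * ‖v‖ ^ 2 := by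
      intro v
      set x' := x + v with hx'
      have hxv : x' - x = v := by simp [hx']
      set u' := ustar x' with hu'
      -- mean value bound on F z = h z u' - h z u
      have hFgrad : ∀ z, HasFDerivAt (fun z => h z u' - h z u)
          (toDual ℝ _ (gradient (fun z => h z u') z) - toDual ℝ _ (gradient (fun z => h z u) z))
          z := fun z => (hgrad u' z).hasFDerivAt.sub (hgrad u z).hasFDerivAt
      have hFbound : ∀ z, ‖(toDual ℝ _ (gradient (fun z => h z u') z)
          - toDual ℝ _ (gradient (fun z => h z u) z) :
            EuclideanSpace ℝ (Fin n) →L[ℝ] ℝ)‖ ≤ Lxu * ‖u' - u‖ := by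
        intro z
        rw [← map_sub]
        rw [LinearIsometryEquiv.norm_map]
        exact hlipu z u' u
      have hmv : ‖(h x' u' - h x' u) - (h x u' - h x u)‖ ≤ (Lxu * ‖u' - u‖) * ‖x' - x‖ := by
        have := convex_univ.norm_image_sub_le_of_norm_hasFDerivWithin_le
          (f := fun z => h z u' - h z u) (s := (Set.univ : Set (EuclideanSpace ℝ (Fin n))))
          (fun z _ => (hFgrad z).hasFDerivWithinAt) (fun z _ => hFbound z)
          (Set.mem_univ x) (Set.mem_univ x')
        exact this
      have huu : ‖u' - u‖ ≤ κ * ‖x' - x‖ := hustar_lip x' x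
      -- sandwich
      have hlow : h x' u ≤ h x' u' := hmax x' (Set.mem_univ u)
      have hup2 : h x u' ≤ h x u := hmax x (Set.mem_univ u')
      have h1 : 0 ≤ h x' u' - h x' u := by linarith
      have h2 : h x' u' - h x' u ≤ (Lxu * κ) * ‖x' - x‖ ^ 2 := by
        have : h x' u' - h x' u ≤ (h x' u' - h x' u) - (h x u' - h x u) := by linarith
        have h3 : (h x' u' - h x' u) - (h x u' - h x u) ≤ (Lxu * ‖u' - u‖) * ‖x' - x‖ :=
          le_trans (le_abs_self _) hmv
        have h4 : (Lxu * ‖u' - u‖) * ‖x' - x‖ ≤ (Lxu * (κ * ‖x' - x‖)) * ‖x' - x‖ := by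
          have := mul_le_mul_of_nonneg_left huu hLxu.le
          exact mul_le_mul_of_nonneg_right this (norm_nonneg _)
        nlinarith [norm_nonneg (x' - x)]
      rw [← hxv]
      have heq : h x' u' - h x u - L (x' - x)
          = (h x' u - h x u - L (x' - x)) + (h x' u' - h x' u) := by ring
      rw [heq]
      calc ‖(h x' u - h x u - L (x' - x)) + (h x' u' - h x' u)‖
          ≤ ‖h x' u - h x u - L (x' - x)‖ + ‖h x' u' - h x' u‖ := norm_add_le _ _
        _ ≤ ‖h x' u - h x u - L (x' - x)‖ + (Lxu * κ) * ‖x' - x‖ ^ 2 := by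
            have : ‖h x' u' - h x' u‖ = h x' u' - h x' u := abs_of_nonneg h1
            rw [this]; linarith
    -- conclude littleO
    have hq : (fun v : EuclideanSpace ℝ (Fin n) => (Lxu * κ) * ‖v‖ ^ 2)
        =o[nhds 0] (fun v => v) := by
      have h2 : (fun v : EuclideanSpace ℝ (Fin n) => ‖v‖ ^ 2) =o[nhds 0]
          (fun v => v) := by
        simpa using Asymptotics.isLittleO_norm_pow_id
          (E' := EuclideanSpace ℝ (Fin n)) (n := 2) one_lt_two
      exact h2.const_mul_left _
    have hsum : (fun v => ‖h (x + v) u - h x u - L v‖ + (Lxu * κ) * ‖v‖ ^ 2)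
        =o[nhds 0] (fun v : EuclideanSpace ℝ (Fin n) => v) :=
      hbase.norm_left.add hq
    refine (Asymptotics.isBigO_of_le _ fun v => ?_).trans_isLittleO hsum
    have hnn : 0 ≤ ‖h (x + v) u - h x u - L v‖ + (Lxu * κ) * ‖v‖ ^ 2 := by
      positivity
    rw [Real.norm_of_nonneg hnn]
    exact key v
  · intro Lxx hLxx hlipx x x'
    calc ‖gradient (fun z => h z (ustar x)) x - gradient (fun z => h z (ustar x')) x'‖
        ≤ ‖gradient (fun z => h z (ustar x)) x - gradient (fun z => h z (ustar x)) x'‖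
          + ‖gradient (fun z => h z (ustar x)) x' - gradient (fun z => h z (ustar x')) x'‖ :=
          norm_sub_le_norm_sub_add_norm_sub _ _ _
      _ ≤ Lxx * ‖x - x'‖ + Lxu * ‖ustar x - ustar x'‖ := by
          gcongr
          · exact hlipx x x' (ustar x)
          · exact hlipu x' (ustar x) (ustar x')
      _ ≤ Lxx * ‖x - x'‖ + Lxu * (κ * ‖x - x'‖) := by
          gcongr
          exact hustar_lip x x'
      _ = (Lxx + Lxu * κ) * ‖x - x'‖ := by ring
end
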